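/- Let v ≥ 1, R = x_v x̄_v ⋯ x_1 x̄_1, and for a clause C = ℓ₁ ∨ ℓ₂ ∨ ℓ₃ with ℓ₁ ∈ {x_α, x̄_α}, ℓ₂ ∈ {x_β, x̄_β}, ℓ₃ ∈ {x_γ, x̄_γ} and α < β < γ, let S_C = R^{α−1} ℓ₁ R^{β−α} ℓ₂ R^{γ−β} ℓ₃ R^{v−γ}. Let X be a string of length v with X[j] ∈ {x_j, x̄_j} for each j. Then X is a subsequence of S_C if and only if X[α] = ℓ₁ or X[β] = ℓ₂ or X[γ] = ℓ₃. -/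

import Mathlib

/-- The character `(j, true)` stands for `x_j` and `(j, false)` for `x̄_j`. -/
def Rstr (v : ℕ) : List (ℕ × Bool) :=
  List.flatten (((List.range v).reverse).map fun j => [(j + 1, true), (j + 1, false)])

/-- k-fold concatenation of `Rstr v`. -/
def Rpow (v k : ℕ) : List (ℕ × Bool) :=
  List.flatten (List.replicate k (Rstr v))

lemma Rstr_succ (v : ℕ) : Rstr (v + 1) = (v + 1, true) :: (v + 1, false) :: Rstr v := by
  simp [Rstr, List.range_succ]

lemma mem_Rstr {v j : ℕ} (h1 : 1 ≤ j) (h2 : j ≤ v) (b : Bool) : (j, b) ∈ Rstr v := by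
  induction v with
  | zero => omega
  | succ n ih =>
    rw [Rstr_succ]
    rcases eq_or_lt_of_le h2 with h | h
    · cases b <;> simp [h]
    · simp only [List.mem_cons]
      exact Or.inr (Or.inr (ih (by omega)))

lemma Rstr_fst_le {v : ℕ} {p : ℕ × Bool} (h : p ∈ Rstr v) : p.1 ≤ v := by
  induction v with
  | zero => simp [Rstr] at h
  | succ n ih =>
    rw [Rstr_succ] at h
    simp only [List.mem_cons] at h
    rcases h with h | h | h
    · simp [h]
    · simp [h]
    · exact (ih h).trans (by omega)

lemma Rstr_nil : Rstr 0 = [] := rfl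

lemma Rstr_pairwise (v : ℕ) : (Rstr v).Pairwise (fun p q => q.1 ≤ p.1) := by
  induction v with
  | zero => rw [Rstr_nil]; exact List.Pairwise.nil
  | succ n ih =>
    rw [Rstr_succ]
    refine List.Pairwise.cons ?_ (List.Pairwise.cons ?_ ih)
    · rintro q hq
      simp only [List.mem_cons] at hq
      rcases hq with h | h
      · simp [h]
      · exact (Rstr_fst_le h).trans (by omega)
    · intro q hq

      exact (Rstr_fst_le hq).trans (by omega)

lemma Rpow_succ (v k : ℕ) : Rpow v (k + 1) = Rstr v ++ Rpow v k := by
  simp [Rpow, List.replicate_succ]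

lemma Rpow_add (v m n : ℕ) : Rpow v (m + n) = Rpow v m ++ Rpow v n := by
  induction m with
  | zero => simp [Rpow]
  | succ k ih =>
    rw [show k + 1 + n = (k + n) + 1 by omega, Rpow_succ, ih, Rpow_succ, List.append_assoc]

lemma sublist_Rstr_len {v : ℕ} {l : List (ℕ × Bool)}
    (hl : l.Pairwise (fun p q => p.1 < q.1)) (h : l.Sublist (Rstr v)) : l.length ≤ 1 := by
  match l, hl with
  | [], _ => simp
  | [x], _ => simp
  | x :: y :: t, hl =>
    exfalso
    have h2 := List.Pairwise.sublist h (Rstr_pairwise v)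
    have hxy : x.1 < y.1 := (List.pairwise_cons.mp hl).1 y (by simp)
    have hyx : y.1 ≤ x.1 := (List.pairwise_cons.mp h2).1 y (by simp)
    omega

lemma length_le_of_sublist_Rpow {v : ℕ} {l : List (ℕ × Bool)} {k : ℕ}
    (hl : l.Pairwise (fun p q => p.1 < q.1)) (h : l.Sublist (Rpow v k)) : l.length ≤ k := by
  induction k generalizing l with
  | zero =>
    simp only [Rpow, List.replicate, List.flatten_nil, List.sublist_nil] at h
    simp [h]
  | succ n ih =>
    rw [Rpow_succ] at h
    obtain ⟨x1, x2, rfl, h1, h2⟩ := List.sublist_append_iff.mp h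
    obtain ⟨p1, p2, -⟩ := List.pairwise_append.mp hl
    have := sublist_Rstr_len p1 h1
    have := ih p2 h2
    simp only [List.length_append]
    omega

lemma sublist_Rpow {v : ℕ} {l : List (ℕ × Bool)}
    (hmem : ∀ p ∈ l, 1 ≤ p.1 ∧ p.1 ≤ v) {k : ℕ} (hk : l.length ≤ k) :
    l.Sublist (Rpow v k) := by
  induction l generalizing k with
  | nil => exact List.nil_sublist _
  | cons x t ih =>
    cases k with
    | zero => simp at hk
    | succ n =>
      rw [Rpow_succ]
      have hx := hmem x List.mem_cons_self
      have h1 : [x].Sublist (Rstr v) := by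
        rw [List.singleton_sublist]
        have := mem_Rstr hx.1 hx.2 x.2
        simpa using this
      have h2 : t.Sublist (Rpow v n) :=
        ih (fun p hp => hmem p (List.mem_cons_of_mem _ hp)) (by simpa using hk)
      exact h1.append h2

lemma sublist_remove {α : Type*} {l l₁ l₂ : List α} {a : α}
    (h : l.Sublist (l₁ ++ a :: l₂)) (ha : a ∉ l) : l.Sublist (l₁ ++ l₂) := by
  obtain ⟨x1, x2, rfl, h1, h2⟩ := List.sublist_append_iff.mp h
  rcases List.sublist_cons_iff.mp h2 with h2 | ⟨r, rfl, hr⟩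
  · exact h1.append h2
  · exact absurd (List.mem_append_right x1 (List.mem_cons_self : a ∈ a :: r)) ha

lemma Rpow_mid_sublist (v k₁ k₂ : ℕ) (x : ℕ × Bool) :
    (Rpow v (k₁ + k₂)).Sublist (Rpow v k₁ ++ x :: Rpow v k₂) := by
  rw [Rpow_add]
  exact (List.Sublist.refl _).append (List.sublist_cons_self _ _)

/-- A 3-clause ℓ₁ ∨ ℓ₂ ∨ ℓ₃; `pa = true` means the literal on variable `a`
is positive, etc. -/
structure Clause3 where
  a : ℕ
  b : ℕ
  c : ℕ
  pa : Bool
  pb : Bool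
  pc : Bool

/-- The clause string S_C = R^{a-1} ℓ₁ R^{b-a} ℓ₂ R^{c-b} ℓ₃ R^{v-c}. -/
def SC (v : ℕ) (C : Clause3) : List (ℕ × Bool) :=
  Rpow v (C.a - 1) ++ [(C.a, C.pa)] ++ Rpow v (C.b - C.a) ++ [(C.b, C.pb)]
    ++ Rpow v (C.c - C.b) ++ [(C.c, C.pc)] ++ Rpow v (v - C.c)

/-- a string X of length v with X[j] ∈ {x_j, x̄_j} for each j is a
subsequence of S_C iff X[a] = ℓ₁ or X[b] = ℓ₂ or X[c] = ℓ₃ (equivalently, X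
contains one of the three literals of the clause). -/
theorem stmt_8 (v : ℕ) (C : Clause3)
    (hv : 1 ≤ C.a ∧ C.a < C.b ∧ C.b < C.c ∧ C.c ≤ v)
    (X : List (ℕ × Bool)) (hlen : X.length = v)
    (hX : ∀ m : Fin X.length, (X.get m).1 = (m : ℕ) + 1) :
    X.Sublist (SC v C) ↔
      ((C.a, C.pa) ∈ X ∨ (C.b, C.pb) ∈ X ∨ (C.c, C.pc) ∈ X) := by
  obtain ⟨ha1, hab, hbc, hcv⟩ := hv
  have hXp : X.Pairwise (fun p q => p.1 < q.1) := by
    rw [List.pairwise_iff_get]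
    intro i j hij
    rw [hX i, hX j]
    omega
  have hmem : ∀ p ∈ X, 1 ≤ p.1 ∧ p.1 ≤ v := by
    intro p hp
    obtain ⟨n, rfl⟩ := List.mem_iff_get.mp hp
    rw [hX n]
    have := n.2
    omega
  -- decomposition of X at a literal in X
  have hsplit : ∀ j : ℕ, ∀ b : Bool, (j, b) ∈ X →
      X = X.take (j - 1) ++ (j, b) :: X.drop j ∧ (X.take (j - 1)).length = j - 1 ∧
        (X.drop j).length = v - j ∧ 1 ≤ j ∧ j ≤ v := by
    intro j b hb
    obtain ⟨n, hn⟩ := List.mem_iff_get.mp hb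
    have hn1 : (n : ℕ) + 1 = j := by
      have := hX n
      rw [hn] at this
      omega
    have hnlt : (n : ℕ) < X.length := n.2
    have hj1 : j - 1 = (n : ℕ) := by omega
    constructor
    · rw [hj1]
      conv_lhs => rw [← List.take_append_drop (n : ℕ) X]
      rw [List.drop_eq_getElem_cons hnlt]
      have : X[(n : ℕ)] = (j, b) := by
        rw [← hn]; rfl
      rw [this, hn1]
    · refine ⟨?_, ?_, ?_, ?_⟩
      · rw [List.length_take]; omega
      · rw [List.length_drop]; omega
      · omega
      · omega
  constructor
  · -- forward
    intro hs
    by_contra hcon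
    push_neg at hcon
    obtain ⟨h1, h2, h3⟩ := hcon
    have e : SC v C = Rpow v (C.a - 1) ++ (C.a, C.pa) ::
        (Rpow v (C.b - C.a) ++ (C.b, C.pb) ::
        (Rpow v (C.c - C.b) ++ (C.c, C.pc) :: Rpow v (v - C.c))) := by
      simp [SC, List.append_assoc]
    rw [e] at hs
    have hs1 := sublist_remove hs h1
    rw [← List.append_assoc] at hs1
    have hs2 := sublist_remove hs1 h2
    rw [← List.append_assoc] at hs2
    have hs3 := sublist_remove hs2 h3
    have hfin : X.Sublist (Rpow v (v - 1)) := by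
      have : Rpow v (v - 1) = Rpow v (C.a - 1) ++ Rpow v (C.b - C.a) ++ Rpow v (C.c - C.b)
          ++ Rpow v (v - C.c) := by
        rw [← Rpow_add, ← Rpow_add, ← Rpow_add]
        congr 1
        omega
      rw [this]
      exact hs3
    have := length_le_of_sublist_Rpow hXp hfin
    omega
  · -- backward
    rintro (h | h | h)
    · obtain ⟨hdec, hYl, hZl, hj1, hjv⟩ := hsplit C.a C.pa h
      set Y := X.take (C.a - 1) with hY
      set Z := X.drop C.a with hZ
      have hYm : ∀ p ∈ Y, 1 ≤ p.1 ∧ p.1 ≤ v := fun p hp => hmem p (List.mem_of_mem_take hp)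
      have hZm : ∀ p ∈ Z, 1 ≤ p.1 ∧ p.1 ≤ v := fun p hp => hmem p (List.mem_of_mem_drop hp)
      have hYs : Y.Sublist (Rpow v (C.a - 1)) := sublist_Rpow hYm (le_of_eq hYl)
      have hZs : Z.Sublist (Rpow v (C.b - C.a) ++ (C.b, C.pb) ::
          (Rpow v (C.c - C.b) ++ (C.c, C.pc) :: Rpow v (v - C.c))) := by
        have h0 : Z.Sublist (Rpow v ((C.b - C.a) + ((C.c - C.b) + (v - C.c)))) :=
          sublist_Rpow hZm (by omega)
        refine h0.trans ?_
        refine (Rpow_mid_sublist v (C.b - C.a) ((C.c - C.b) + (v - C.c)) (C.b, C.pb)).trans ?_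
        exact (List.Sublist.refl _).append
          ((Rpow_mid_sublist v (C.c - C.b) (v - C.c) (C.c, C.pc)).cons₂ _)
      have e : SC v C = Rpow v (C.a - 1) ++ (C.a, C.pa) :: (Rpow v (C.b - C.a) ++ (C.b, C.pb) ::
          (Rpow v (C.c - C.b) ++ (C.c, C.pc) :: Rpow v (v - C.c))) := by
        simp [SC, List.append_assoc]
      rw [e, hdec]
      exact hYs.append (hZs.cons₂ _)
    · obtain ⟨hdec, hYl, hZl, hj1, hjv⟩ := hsplit C.b C.pb h
      set Y := X.take (C.b - 1) with hY
      set Z := X.drop C.b with hZ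
      have hYm : ∀ p ∈ Y, 1 ≤ p.1 ∧ p.1 ≤ v := fun p hp => hmem p (List.mem_of_mem_take hp)
      have hZm : ∀ p ∈ Z, 1 ≤ p.1 ∧ p.1 ≤ v := fun p hp => hmem p (List.mem_of_mem_drop hp)
      have hYs : Y.Sublist (Rpow v (C.a - 1) ++ (C.a, C.pa) :: Rpow v (C.b - C.a)) := by
        have h0 : Y.Sublist (Rpow v ((C.a - 1) + (C.b - C.a))) := sublist_Rpow hYm (by omega)
        exact h0.trans (Rpow_mid_sublist v (C.a - 1) (C.b - C.a) (C.a, C.pa))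
      have hZs : Z.Sublist (Rpow v (C.c - C.b) ++ (C.c, C.pc) :: Rpow v (v - C.c)) := by
        have h0 : Z.Sublist (Rpow v ((C.c - C.b) + (v - C.c))) := sublist_Rpow hZm (by omega)
        exact h0.trans (Rpow_mid_sublist v (C.c - C.b) (v - C.c) (C.c, C.pc))
      have e : SC v C = (Rpow v (C.a - 1) ++ (C.a, C.pa) :: Rpow v (C.b - C.a)) ++ (C.b, C.pb) ::
          (Rpow v (C.c - C.b) ++ (C.c, C.pc) :: Rpow v (v - C.c)) := by
        simp [SC, List.append_assoc]
      rw [e, hdec]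
      exact hYs.append (hZs.cons₂ _)
    · obtain ⟨hdec, hYl, hZl, hj1, hjv⟩ := hsplit C.c C.pc h
      set Y := X.take (C.c - 1) with hY
      set Z := X.drop C.c with hZ
      have hYm : ∀ p ∈ Y, 1 ≤ p.1 ∧ p.1 ≤ v := fun p hp => hmem p (List.mem_of_mem_take hp)
      have hZm : ∀ p ∈ Z, 1 ≤ p.1 ∧ p.1 ≤ v := fun p hp => hmem p (List.mem_of_mem_drop hp)
      have hYs : Y.Sublist (Rpow v (C.a - 1) ++ (C.a, C.pa) ::
          (Rpow v (C.b - C.a) ++ (C.b, C.pb) :: Rpow v (C.c - C.b))) := by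
        have h0 : Y.Sublist (Rpow v ((C.a - 1) + ((C.b - C.a) + (C.c - C.b)))) :=
          sublist_Rpow hYm (by omega)
        refine h0.trans ?_
        refine (Rpow_mid_sublist v (C.a - 1) ((C.b - C.a) + (C.c - C.b)) (C.a, C.pa)).trans ?_
        exact (List.Sublist.refl _).append
          ((Rpow_mid_sublist v (C.b - C.a) (C.c - C.b) (C.b, C.pb)).cons₂ _)
      have hZs : Z.Sublist (Rpow v (v - C.c)) := sublist_Rpow hZm (by omega)
      have e : SC v C = (Rpow v (C.a - 1) ++ (C.a, C.pa) ::
          (Rpow v (C.b - C.a) ++ (C.b, C.pb) :: Rpow v (C.c - C.b))) ++ (C.c, C.pc) ::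
          Rpow v (v - C.c) := by
        simp [SC, List.append_assoc]
      rw [e, hdec]
      exact hYs.append (hZs.cons₂ _)
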